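/- arXiv:2101.09047 — 3 statements merged into one kernel-verified Lean document; each statement's English description precedes it below -/
import Mathlib

section
/- Suppose there exists a multiplier λ = (λ₀, λ₁, λ₂) ∈ ℝ × ℝ³ × ℝ such that the function M(v) = exp(m λ₀ + m λ₁·v + m λ₂|v|²) belongs to the constraint set χ (i.e., M ≥ 0, ν(v)(1+|v|²)M(v) is integrable on ℝ³, and ∫ ν(v)(m, m v, m|v|²)(M(v) − f(v)) dv = 0). Then M minimizes the weighted entropy functional g ↦ ∫ ν(v) h(g(v)) dv over χ: for every g ∈ χ one has ∫ ν h(g) dv ≥ ∫ ν h(M) dv; moreover, if ν > 0 almost everywhere, then M is the unique minimizer (any minimizer equals M almost everywhere). -/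
/-! With `L v = λ · (m, m v, m |v|²) = log M v`, the Bregman identity
`h z - h (M v) - L v (z - M v) = M v · klFun (z / M v)`, where `klFun x = x log x + 1 - x`,
integrates against `ν` to `∫ ν h(g) - ∫ ν h(M) = ∫ ν M klFun (g / M)`: the linear term drops
out because `∫ ν L g` only depends on the moments of `g`, which every member of `χ` shares
with `f`. Since `klFun ≥ 0` with equality only at `1`, the right side is nonnegative, and
when `ν > 0` a.e. it vanishes only if `g = M` a.e. -/

open MeasureTheory Real Filter
open scoped Topology

noncomputable section

abbrev V3 : Type := Fin 3 → ℝ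

def dot3 (a b : V3) : ℝ := ∑ i, a i * b i

def nsq (v : V3) : ℝ := ∑ i, (v i) ^ 2

abbrev L5 : Type := ℝ × V3 × ℝ

def dot5 (a b : L5) : ℝ := a.1 * b.1 + dot3 a.2.1 b.2.1 + a.2.2 * b.2.2

def aVec (m : ℝ) (v : V3) : L5 := (m, m • v, m * nsq v)

def expA (m : ℝ) (l : L5) (v : V3) : ℝ := Real.exp (dot5 l (aVec m v))

def momVec (m : ℝ) (ν g : V3 → ℝ) : L5 :=
  (∫ v, ν v * (m * g v), fun i => ∫ v, ν v * (m * v i) * g v,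
    ∫ v, ν v * (m * nsq v) * g v)

def zdual (m : ℝ) (ν : V3 → ℝ) (l ρ : L5) : ℝ :=
  (∫ v, ν v * expA m l v) - dot5 l ρ

def entH (z : ℝ) : ℝ := z * Real.log z - z

def dualCLM (ρ : L5) : L5 →L[ℝ] ℝ :=
  LinearMap.toContinuousLinearMap
    { toFun := fun δ => dot5 δ ρ
      map_add' := by
        intro a b
        simp [dot5, dot3, Prod.fst_add, Prod.snd_add, Pi.add_apply, add_mul,
          Finset.sum_add_distrib]
        ring
      map_smul' := by
        intro c a
        simp only [dot5, dot3, Prod.smul_fst, Prod.smul_snd, Pi.smul_apply,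
          smul_eq_mul, Finset.mul_sum, RingHom.id_apply]
        ring_nf
        rw [Finset.mul_sum]
        ring_nf }


/-- Membership in the constraint set χ: nonnegativity, weighted integrability,
and the intra-species moment constraints relative to `f`. -/
def memChi (m : ℝ) (ν f g : V3 → ℝ) : Prop :=
  (∀ v, 0 ≤ g v) ∧
  Integrable (fun v => ν v * (1 + nsq v) * g v) ∧
  (∫ v, ν v * (m * (g v - f v))) = 0 ∧
  (∀ i : Fin 3, (∫ v, ν v * (m * v i * (g v - f v))) = 0) ∧
  (∫ v, ν v * (m * nsq v * (g v - f v))) = 0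

open InformationTheory

theorem Integrable.mul_of_abs_le_const_mul {α : Type*} [MeasurableSpace α] {μ : Measure α}
    {ρ ψ w : α → ℝ} {C : ℝ} (hw : Integrable (fun x => ρ x * w x) μ)
    (hρ : AEStronglyMeasurable ρ μ) (hψ : AEStronglyMeasurable ψ μ)
    (hle : ∀ x, |ψ x| ≤ C * |ρ x|) : Integrable (fun x => ψ x * w x) μ := by
  have heq : ∀ x, ψ x / ρ x * (ρ x * w x) = ψ x * w x := by
    intro x
    rcases eq_or_ne (ρ x) 0 with h | h
    · have : ψ x = 0 := abs_nonpos_iff.mp (by simpa [h] using hle x)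
      simp [this]
    · field_simp
  refine (hw.bdd_mul (c := |C|) (hψ.div₀ hρ) (Eventually.of_forall fun x => ?_)).congr
    (Eventually.of_forall fun x => heq x)
  rw [Pi.div_apply, norm_div, Real.norm_eq_abs, Real.norm_eq_abs]
  exact div_le_of_le_mul₀ (abs_nonneg _) (abs_nonneg _)
    ((hle x).trans (mul_le_mul_of_nonneg_right (le_abs_self C) (abs_nonneg _)))

lemma nsq_nonneg (v : V3) : 0 ≤ nsq v :=
  Finset.sum_nonneg fun _ _ => sq_nonneg _

lemma measurable_nsq : Measurable nsq :=
  Finset.measurable_sum _ fun i _ => (measurable_pi_apply i).pow_const 2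

lemma abs_le_one_add_nsq (v : V3) (i : Fin 3) : |v i| ≤ 1 + nsq v := by
  have : v i ^ 2 ≤ nsq v :=
    Finset.single_le_sum (f := fun j => v j ^ 2) (fun j _ => sq_nonneg _) (Finset.mem_univ i)
  nlinarith [abs_nonneg (v i), sq_abs (v i)]

lemma dot5_aVec (m : ℝ) (l : L5) (v : V3) :
    dot5 l (aVec m v) = m * l.1 + m * dot3 l.2.1 v + m * l.2.2 * nsq v := by
  simp only [dot5, aVec, dot3, Pi.smul_apply, smul_eq_mul, Finset.mul_sum]
  ring_nf

lemma expA_pos (m : ℝ) (l : L5) (v : V3) : 0 < expA m l v :=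
  exp_pos _

lemma log_expA (m : ℝ) (l : L5) (v : V3) : log (expA m l v) = dot5 l (aVec m v) :=
  log_exp _

section Moments

variable (m : ℝ) {ν f g : V3 → ℝ}

lemma integrable_moment (hg : Integrable (fun v => ν v * (1 + nsq v) * g v))
    {ψ : V3 → ℝ} {C : ℝ} (hψ : Measurable ψ) (hle : ∀ v, |ψ v| ≤ C * (1 + nsq v)) :
    Integrable (fun v => ν v * ψ v * g v) := by
  have hρ : Measurable fun v => 1 + nsq v := measurable_const.add measurable_nsq
  have hψg := Integrable.mul_of_abs_le_const_mul (ψ := ψ) (w := fun v => ν v * g v)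
    (hg.congr (Eventually.of_forall fun v => by ring)) hρ.aestronglyMeasurable
    hψ.aestronglyMeasurable fun v => by
      rw [abs_of_pos (show (0 : ℝ) < 1 + nsq v by linarith [nsq_nonneg v])]
      exact hle v
  exact hψg.congr (Eventually.of_forall fun v => by ring)

lemma integrable_moments (hg : Integrable (fun v => ν v * (1 + nsq v) * g v)) :
    Integrable (fun v => ν v * m * g v) ∧
    (∀ i, Integrable (fun v => ν v * (m * v i) * g v)) ∧
    Integrable (fun v => ν v * (m * nsq v) * g v) := by
  have one_le : ∀ v, 1 ≤ 1 + nsq v := fun v => by linarith [nsq_nonneg v]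
  refine ⟨integrable_moment hg measurable_const fun v =>
      le_mul_of_one_le_right (abs_nonneg m) (one_le v),
    fun i => integrable_moment (C := |m|) hg (measurable_const.mul (measurable_pi_apply i))
      fun v => ?_,
    integrable_moment (C := |m|) hg (measurable_const.mul measurable_nsq) fun v => ?_⟩
  · rw [abs_mul]
    exact mul_le_mul_of_nonneg_left (abs_le_one_add_nsq v i) (abs_nonneg m)
  · rw [abs_mul, abs_of_nonneg (nsq_nonneg v)]
    exact mul_le_mul_of_nonneg_left (by linarith) (abs_nonneg m)

lemma momVec_eq_of_memChi (hf : Integrable (fun v => ν v * (1 + nsq v) * f v))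
    (hg : memChi m ν f g) : momVec m ν g = momVec m ν f := by
  obtain ⟨-, hgint, h0, h1, h2⟩ := hg
  obtain ⟨hg0, hg1, hg2⟩ := integrable_moments m hgint
  obtain ⟨hf0, hf1, hf2⟩ := integrable_moments m hf
  have moment_eq : ∀ ψ : V3 → ℝ, Integrable (fun v => ν v * ψ v * g v) →
      Integrable (fun v => ν v * ψ v * f v) → ∫ v, ν v * ψ v * (g v - f v) = 0 →
      ∫ v, ν v * ψ v * g v = ∫ v, ν v * ψ v * f v := by
    intro ψ hψg hψf h
    rw [← sub_eq_zero, ← integral_sub hψg hψf]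
    simpa only [mul_sub] using h
  refine Prod.ext ?_ (Prod.ext (funext fun i => ?_) ?_)
  · simpa only [momVec, mul_assoc] using
      moment_eq (fun _ => m) hg0 hf0 (by simpa only [mul_assoc] using h0)
  · simpa only [momVec, mul_assoc] using
      moment_eq (fun v => m * v i) (hg1 i) (hf1 i) (by simpa only [mul_assoc] using h1 i)
  · simpa only [momVec, mul_assoc] using
      moment_eq (fun v => m * nsq v) hg2 hf2 (by simpa only [mul_assoc] using h2)

lemma nu_mul_dot5_aVec_mul (l : L5) (v : V3) :
    ν v * dot5 l (aVec m v) * g v = l.1 * (ν v * m * g v) +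
      ∑ i, l.2.1 i * (ν v * (m * v i) * g v) + l.2.2 * (ν v * (m * nsq v) * g v) := by
  simp only [dot5_aVec, dot3, Fin.sum_univ_three]
  ring

lemma integrable_nu_mul_dot5_aVec_mul (hg : Integrable (fun v => ν v * (1 + nsq v) * g v))
    (l : L5) : Integrable (fun v => ν v * dot5 l (aVec m v) * g v) := by
  obtain ⟨h0, h1, h2⟩ := integrable_moments m hg
  simp_rw [nu_mul_dot5_aVec_mul m]
  exact ((h0.const_mul _).add (integrable_finsetSum _ fun i _ => (h1 i).const_mul _)).add
    (h2.const_mul _)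

lemma integral_nu_mul_dot5_aVec_mul (hg : Integrable (fun v => ν v * (1 + nsq v) * g v))
    (l : L5) : ∫ v, ν v * dot5 l (aVec m v) * g v = dot5 l (momVec m ν g) := by
  obtain ⟨h0, h1, h2⟩ := integrable_moments m hg
  simp_rw [nu_mul_dot5_aVec_mul m]
  have hsum :=
    integrable_finsetSum (μ := volume) Finset.univ fun i _ => (h1 i).const_mul (l.2.1 i)
  rw [integral_add _ (h2.const_mul _), integral_add (h0.const_mul _) hsum,
    integral_finsetSum _ fun i _ => (h1 i).const_mul _]
  · simp only [integral_const_mul, dot5, dot3, momVec, mul_assoc]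
  · exact (h0.const_mul _).add hsum

end Moments

lemma entH_sub_entH_sub_log_mul {z w : ℝ} (hz : 0 ≤ z) (hw : 0 < w) :
    entH z - entH w - log w * (z - w) = w * klFun (z / w) := by
  rcases hz.eq_or_lt with rfl | hz
  · rw [zero_div, klFun_zero, entH, entH]
    ring
  · rw [klFun, log_div hz.ne' hw.ne', entH, entH]
    field_simp
    ring

lemma integral_entH_sub_integral_entH {m : ℝ} {l : L5} {ν f g : V3 → ℝ}
    (hf : Integrable (fun v => ν v * (1 + nsq v) * f v))
    (hM : memChi m ν f (expA m l)) (hMent : Integrable (fun v => ν v * entH (expA m l v)))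
    (hg : memChi m ν f g) (hgent : Integrable (fun v => ν v * entH (g v))) :
    Integrable (fun v => ν v * (expA m l v * klFun (g v / expA m l v))) ∧
    (∫ v, ν v * entH (g v)) - ∫ v, ν v * entH (expA m l v) =
      ∫ v, ν v * (expA m l v * klFun (g v / expA m l v)) := by
  have hpt : ∀ v, ν v * (expA m l v * klFun (g v / expA m l v)) =
      ν v * entH (g v) - ν v * entH (expA m l v) -
        (ν v * dot5 l (aVec m v) * g v - ν v * dot5 l (aVec m v) * expA m l v) := by
    intro v
    rw [← entH_sub_entH_sub_log_mul (hg.1 v) (expA_pos m l v), log_expA]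
    ring
  have hlg := integrable_nu_mul_dot5_aVec_mul m hg.2.1 l
  have hlM := integrable_nu_mul_dot5_aVec_mul m hM.2.1 l
  have hent : Integrable fun v => ν v * entH (g v) - ν v * entH (expA m l v) := hgent.sub hMent
  have hlin : Integrable fun v =>
      ν v * dot5 l (aVec m v) * g v - ν v * dot5 l (aVec m v) * expA m l v := hlg.sub hlM
  simp_rw [hpt]
  refine ⟨hent.sub hlin, ?_⟩
  rw [integral_sub hent hlin, integral_sub hgent hMent, integral_sub hlg hlM,
    integral_nu_mul_dot5_aVec_mul m hg.2.1, integral_nu_mul_dot5_aVec_mul m hM.2.1,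
    momVec_eq_of_memChi m hf hg, momVec_eq_of_memChi m hf hM, sub_self, sub_zero]

theorem entropy_min_single_species_general
    (m : ℝ)
    (ν : V3 → ℝ) (hν0 : ∀ v, 0 ≤ ν v)
    (f : V3 → ℝ)
    (hfint : Integrable (fun v => ν v * (1 + nsq v) * f v))
    (l : L5) (M : V3 → ℝ)
    (hMdef : M = fun v => Real.exp (m * l.1 + m * dot3 l.2.1 v + m * l.2.2 * nsq v))
    (hMchi : memChi m ν f M)
    (hMent : Integrable (fun v => ν v * entH (M v))) :
    (∀ g : V3 → ℝ, memChi m ν f g → Integrable (fun v => ν v * entH (g v)) →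
        (∫ v, ν v * entH (M v)) ≤ ∫ v, ν v * entH (g v)) ∧
    ((∀ᵐ v, 0 < ν v) →
      ∀ g : V3 → ℝ, memChi m ν f g → Integrable (fun v => ν v * entH (g v)) →
        (∫ v, ν v * entH (g v)) = (∫ v, ν v * entH (M v)) →
        g =ᵐ[volume] M) := by
  obtain rfl : M = expA m l := by
    rw [hMdef]
    funext v
    rw [expA, dot5_aVec]
  have hM0 := expA_pos m l
  have hD0 : ∀ g, memChi m ν f g → ∀ v, 0 ≤ ν v * (expA m l v * klFun (g v / expA m l v)) :=
    fun g hg v => mul_nonneg (hν0 v) <|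
      mul_nonneg (hM0 v).le (klFun_nonneg (div_nonneg (hg.1 v) (hM0 v).le))
  refine ⟨fun g hg hgent => ?_, fun hνpos g hg hgent heq => ?_⟩
  · rw [← sub_nonneg, (integral_entH_sub_integral_entH hfint hMchi hMent hg hgent).2]
    exact integral_nonneg (hD0 g hg)
  · obtain ⟨hint, hid⟩ := integral_entH_sub_integral_entH hfint hMchi hMent hg hgent
    have hD := (integral_eq_zero_iff_of_nonneg (hD0 g hg) hint).mp (by linarith)
    filter_upwards [hD, hνpos] with v hDv hνv
    have hkl := (mul_eq_zero.mp ((mul_eq_zero.mp hDv).resolve_left hνv.ne')).resolve_left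
      (hM0 v).ne'
    rwa [klFun_eq_zero_iff (div_nonneg (hg.1 v) (hM0 v).le), div_eq_one_iff_eq (hM0 v).ne']
      at hkl

/-- if an exponential function `M` of the given form lies in the
constraint set χ, then it minimizes the weighted entropy `∫ ν h(g)` over χ;
moreover, if `ν > 0` a.e., any minimizer coincides with `M` almost everywhere. -/
theorem entropy_min_single_species
    (m : ℝ) (hm : 0 < m)
    (ν : V3 → ℝ) (hνmeas : Measurable ν) (hν0 : ∀ v, 0 ≤ ν v)
    (f : V3 → ℝ) (hfmeas : Measurable f) (hf0 : ∀ v, 0 ≤ f v)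
    (hfint : Integrable (fun v => ν v * (1 + nsq v) * f v))
    (l : L5) (M : V3 → ℝ)
    (hMdef : M = fun v => Real.exp (m * l.1 + m * dot3 l.2.1 v + m * l.2.2 * nsq v))
    (hMchi : memChi m ν f M)
    (hMent : Integrable (fun v => ν v * entH (M v))) :
    (∀ g : V3 → ℝ, memChi m ν f g → Integrable (fun v => ν v * entH (g v)) →
        (∫ v, ν v * entH (M v)) ≤ ∫ v, ν v * entH (g v)) ∧
    ((∀ᵐ v, 0 < ν v) →
      ∀ g : V3 → ℝ, memChi m ν f g → Integrable (fun v => ν v * entH (g v)) →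
        (∫ v, ν v * entH (g v)) = (∫ v, ν v * entH (M v)) →
        g =ᵐ[volume] M) :=
  entropy_min_single_species_general m ν hν0 f hfint l M hMdef hMchi hMent
end
end

section
/- Let λ ∈ Λ, let ξ be a unit vector in ℝ⁵, and suppose the boundary parameter s_b(ξ,λ) = sup{ s ≥ 0 : λ + sξ ∈ Λ } is finite, so that λ + s_b(ξ,λ)ξ ∉ Λ and hence ν·exp((λ + s_b(ξ,λ)ξ)·a) is not integrable. Then ∫ ν(v) exp((λ + sξ)·a(v)) dv → ∞ as s → s_b(ξ,λ) from below; consequently, for every ρ ∈ ℝ⁵, z(λ + sξ; ρ) = ∫ ν exp((λ+sξ)·a) dv − (λ+sξ)·ρ → ∞ as s → s_b(ξ,λ)⁻. -/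
open MeasureTheory Real Filter
open scoped Topology

noncomputable section

/-!
Along the ray `λ + sξ` the quadratic coefficient `λ₂ + s ξ₂` is affine in `s`, so a finite
boundary parameter forces `ξ₂ > 0` and `λ₂ + s_b ξ₂ = 0`: the integrand `ν exp((λ + sξ)·a)` is
integrable for `s < s_b` but not at `s = s_b`. It is positive and continuous in `s`, so Fatou's lemma
along `s → s_b⁻` bounds the (infinite) integral at `s_b` by the limit inferior of the integrals
below `s_b`. The linear term `(λ + sξ)·ρ` converges, so `z` blows up as well.
-/

open Set
open scoped ENNReal

section Fatou

variable {α ι : Type*} [MeasurableSpace α] {μ : Measure α} {l : Filter ι}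
  [l.IsCountablyGenerated] [l.NeBot]

theorem tendsto_lintegral_nhds_top_of_tendsto {f : ι → α → ℝ≥0∞} {F : α → ℝ≥0∞}
    (hf : ∀ i, AEMeasurable (f i) μ) (hlim : ∀ᵐ x ∂μ, Tendsto (fun i => f i x) l (𝓝 (F x)))
    (hF : ∫⁻ x, F x ∂μ = ∞) : Tendsto (fun i => ∫⁻ x, f i x ∂μ) l (𝓝 ∞) := by
  refine tendsto_of_le_liminf_of_limsup_le ?_ le_top
  calc ∞ = ∫⁻ x, F x ∂μ := hF.symm
    _ = ∫⁻ x, liminf (fun i => f i x) l ∂μ :=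
      lintegral_congr_ae (hlim.mono fun x hx => hx.liminf_eq.symm)
    _ ≤ liminf (fun i => ∫⁻ x, f i x ∂μ) l := lintegral_liminf_le' hf

theorem tendsto_integral_atTop_of_tendsto {f : ι → α → ℝ} {F : α → ℝ}
    (hf_nonneg : ∀ i, 0 ≤ᵐ[μ] f i) (hf_meas : ∀ i, AEStronglyMeasurable (f i) μ)
    (hf_int : ∀ᶠ i in l, Integrable (f i) μ)
    (hlim : ∀ᵐ x ∂μ, Tendsto (fun i => f i x) l (𝓝 (F x)))
    (hF : ∫⁻ x, ENNReal.ofReal (F x) ∂μ = ∞) :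
    Tendsto (fun i => ∫ x, f i x ∂μ) l atTop := by
  rw [← ENNReal.tendsto_ofReal_nhds_top]
  refine (tendsto_lintegral_nhds_top_of_tendsto
    (fun i => (hf_meas i).aemeasurable.ennreal_ofReal)
    (hlim.mono fun x hx => (ENNReal.continuous_ofReal.tendsto _).comp hx) hF).congr' ?_
  filter_upwards [hf_int] with i hi
  exact (ofReal_integral_eq_lintegral_ofReal hi (hf_nonneg i)).symm

end Fatou

theorem add_mul_eq_zero_of_isLUB {a b c : ℝ} (ha : a < 0)
    (hc : IsLUB {s | 0 ≤ s ∧ a + s * b < 0} c) : a + c * b = 0 ∧ ∀ s < c, a + s * b < 0 := by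
  have hc0 : 0 ≤ c := hc.1 ⟨le_rfl, by simpa using ha⟩
  have hb : 0 < b := by
    by_contra! hb
    have : c + 1 ≤ c := hc.1 ⟨by linarith, by nlinarith⟩
    linarith
  have hset : {s | 0 ≤ s ∧ a + s * b < 0} = Ico 0 (-a / b) := by
    ext s
    simp only [mem_ofPred_eq, mem_Ico, lt_div_iff₀ hb]
    constructor <;> rintro ⟨h0, h1⟩ <;> exact ⟨h0, by linarith⟩
  have hc_eq : c = -a / b := hc.unique (hset ▸ isLUB_Ico (div_pos (neg_pos.2 ha) hb))
  refine ⟨by rw [hc_eq]; field_simp; ring, fun s hs => ?_⟩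
  have : s * b < c * b := mul_lt_mul_of_pos_right hs hb
  rw [hc_eq, div_mul_cancel₀ _ hb.ne'] at this
  linarith

theorem continuous_dot5_left (ρ : L5) : Continuous fun l => dot5 l ρ :=
  (dualCLM ρ).continuous

theorem continuous_expA (m : ℝ) (l : L5) : Continuous (expA m l) := by
  unfold expA dot5 dot3 aVec nsq
  fun_prop

theorem blow_up_at_finite_boundary_general
    (m : ℝ)
    (ν : V3 → ℝ) (hνmeas : Measurable ν) (hνpos : ∀ v, 0 < ν v)
    (hass : ∀ l : L5, Integrable (fun v => ν v * expA m l v) ↔ l.2.2 < 0)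
    (l : L5) (hl : l.2.2 < 0)
    (ξ : L5)
    (sb : ℝ)
    (hsb : IsLUB {s : ℝ | 0 ≤ s ∧ (l + s • ξ).2.2 < 0} sb) :
    Tendsto (fun s : ℝ => ∫ v, ν v * expA m (l + s • ξ) v) (𝓝[<] sb) atTop ∧
    ∀ ρ : L5, Tendsto (fun s : ℝ => zdual m ν (l + s • ξ) ρ) (𝓝[<] sb) atTop := by
  have hray : ∀ s : ℝ, (l + s • ξ).2.2 = l.2.2 + s * ξ.2.2 := fun s => by simp
  simp only [hray] at hsb
  obtain ⟨hboundary, hbelow⟩ := add_mul_eq_zero_of_isLUB hl hsb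
  have hline : Continuous fun s : ℝ => l + s • ξ := by fun_prop
  set f : ℝ → V3 → ℝ := fun s v => ν v * expA m (l + s • ξ) v
  have hf_pos : ∀ s v, 0 < f s v := fun s v => mul_pos (hνpos v) (Real.exp_pos _)
  have hf_meas : ∀ s, Measurable (f s) := fun s => hνmeas.mul (continuous_expA m _).measurable
  have hf_cont : ∀ v, Continuous (f · v) := fun v =>
    continuous_const.mul (Real.continuous_exp.comp ((continuous_dot5_left _).comp hline))
  have hnot : ¬ Integrable (f sb) := by rw [hass, hray, hboundary]; exact lt_irrefl 0
  have hblow : Tendsto (fun s => ∫ v, f s v) (𝓝[<] sb) atTop :=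
    tendsto_integral_atTop_of_tendsto (fun s => ae_of_all _ fun v => (hf_pos s v).le)
      (fun s => (hf_meas s).aestronglyMeasurable)
      (eventually_nhdsWithin_of_forall fun s hs => (hass _).2 (hray s ▸ hbelow s hs))
      (ae_of_all _ fun v => ((hf_cont v).tendsto sb).mono_left nhdsWithin_le_nhds)
      (not_ne_iff.mp ((lintegral_ofReal_ne_top_iff_integrable (hf_meas sb).aestronglyMeasurable
        (ae_of_all _ fun v => (hf_pos sb v).le)).not.mpr hnot))
  refine ⟨hblow, fun ρ => ?_⟩
  have hlin : Tendsto (fun s : ℝ => -dot5 (l + s • ξ) ρ) (𝓝[<] sb) (𝓝 (-dot5 (l + sb • ξ) ρ)) :=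
    (((continuous_dot5_left ρ).comp hline).neg.tendsto sb).mono_left nhdsWithin_le_nhds
  simpa only [zdual, sub_eq_add_neg] using hblow.atTop_add hlin

/-- if the boundary parameter `s_b(ξ,λ) = sup{s ≥ 0 : λ + sξ ∈ Λ}`
is finite (expressed via `IsLUB`), then `∫ ν exp((λ+sξ)·a) dv → ∞` as
`s → s_b(ξ,λ)⁻`, and consequently `z(λ+sξ;ρ) → ∞` as `s → s_b(ξ,λ)⁻`
for every `ρ ∈ ℝ⁵`. -/
theorem blow_up_at_finite_boundary
    (m : ℝ) (hm : 0 < m)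
    (ν : V3 → ℝ) (hνmeas : Measurable ν) (hνpos : ∀ v, 0 < ν v)
    (hass : ∀ l : L5, Integrable (fun v => ν v * expA m l v) ↔ l.2.2 < 0)
    (l : L5) (hl : l.2.2 < 0)
    (ξ : L5) (hξ : ‖ξ‖ = 1)
    (sb : ℝ)
    (hsb : IsLUB {s : ℝ | 0 ≤ s ∧ (l + s • ξ).2.2 < 0} sb) :
    Tendsto (fun s : ℝ => ∫ v, ν v * expA m (l + s • ξ) v) (𝓝[<] sb) atTop ∧
    ∀ ρ : L5, Tendsto (fun s : ℝ => zdual m ν (l + s • ξ) ρ) (𝓝[<] sb) atTop :=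
  blow_up_at_finite_boundary_general m ν hνmeas hνpos hass l hl ξ sb hsb
end
end

section
/- Let λ ∈ Λ and let ξ ∈ ℝ⁵ be a unit vector such that λ + sξ ∈ Λ for all s > 0 and such that the set { v ∈ ℝ³ : ξ·a(v) > 0 } has positive Lebesgue measure. Then for every ρ ∈ ℝ⁵, z(λ + sξ; ρ) = ∫ ν(v) exp((λ + sξ)·a(v)) dv − (λ + sξ)·ρ → +∞ as s → +∞. -/
open MeasureTheory Real Filter
open scoped Topology

noncomputable section

/-!
Along the ray `λ + sξ` the integrand picks up the factor `exp (s ξ·a(v))`. Since `ξ·a` is positive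
on a set of positive measure, it is at least some `ε > 0` on a set `E` of positive measure, so
`∫ ν exp((λ + sξ)·a) ≥ exp (s ε) ∫_E ν exp(λ·a)`, which grows exponentially, while the linear term
`(λ + sξ)·ρ` grows only linearly in `s`.
-/

lemma dot5_add_smul (l ξ w : L5) (s : ℝ) :
    dot5 (l + s • ξ) w = dot5 l w + s * dot5 ξ w := by
  simp only [dot5, dot3, Fin.sum_univ_three, Prod.fst_add, Prod.snd_add, Prod.smul_fst,
    Prod.smul_snd, Pi.add_apply, Pi.smul_apply, smul_eq_mul]
  ring

lemma expA_add_smul (m s : ℝ) (l ξ : L5) (v : V3) :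
    expA m (l + s • ξ) v = expA m l v * exp (s * dot5 ξ (aVec m v)) := by
  rw [expA, expA, dot5_add_smul, exp_add]

lemma continuous_dot5_aVec (m : ℝ) (ξ : L5) : Continuous fun v : V3 => dot5 ξ (aVec m v) := by
  simp only [dot5, dot3, aVec, nsq, Fin.sum_univ_three, Pi.smul_apply, smul_eq_mul]
  fun_prop

lemma exists_pos_measure_le_of_measure_pos {α : Type*} [MeasurableSpace α] {μ : Measure α}
    {g : α → ℝ} (hg : 0 < μ {x | 0 < g x}) : ∃ ε > 0, 0 < μ {x | ε ≤ g x} := by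
  by_contra! h
  have hsub : {x | 0 < g x} ⊆ ⋃ n : ℕ, {x | 1 / ((n : ℝ) + 1) ≤ g x} := fun x hx => by
    obtain ⟨n, hn⟩ := exists_nat_one_div_lt (show 0 < g x from hx)
    exact Set.mem_iUnion.2 ⟨n, hn.le⟩
  have hnull := measure_mono_null hsub <| measure_iUnion_null fun n =>
    nonpos_iff_eq_zero.1 (h _ Nat.one_div_pos_of_nat)
  exact hg.ne' hnull

lemma setIntegral_pos_of_pos {α : Type*} [MeasurableSpace α] {μ : Measure α} {f : α → ℝ}
    {s : Set α} (hf : ∀ x, 0 < f x) (hfi : IntegrableOn f s μ) (hs : 0 < μ s) :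
    0 < ∫ x in s, f x ∂μ := by
  rw [setIntegral_pos_iff_support_of_nonneg_ae (ae_of_all _ fun x => (hf x).le) hfi,
    Function.support_eq_univ fun x => (hf x).ne', Set.univ_inter]
  exact hs

lemma setIntegral_mul_exp_le_integral_mul_exp {α : Type*} [MeasurableSpace α] {μ : Measure α}
    {f g : α → ℝ} {E : Set α} {ε s : ℝ} (hs : 0 ≤ s) (hf : ∀ x, 0 ≤ f x)
    (hfg : Integrable (fun x => f x * exp (s * g x)) μ) (hE : MeasurableSet E)
    (hεE : ∀ x ∈ E, ε ≤ g x) :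
    (∫ x in E, f x ∂μ) * exp (s * ε) ≤ ∫ x, f x * exp (s * g x) ∂μ := by
  rw [← integral_mul_const]
  calc ∫ x in E, f x * exp (s * ε) ∂μ ≤ ∫ x in E, f x * exp (s * g x) ∂μ := by
        refine integral_mono_of_nonneg (ae_of_all _ fun x => mul_nonneg (hf x) (exp_pos _).le)
          hfg.integrableOn ?_
        filter_upwards [ae_restrict_mem hE] with x hx
        exact mul_le_mul_of_nonneg_left
          (exp_le_exp.2 (mul_le_mul_of_nonneg_left (hεE x hx) hs)) (hf x)
    _ ≤ ∫ x, f x * exp (s * g x) ∂μ :=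
        setIntegral_le_integral hfg (ae_of_all _ fun x => mul_nonneg (hf x) (exp_pos _).le)

lemma tendsto_mul_exp_sub_linear_atTop {c : ℝ} (hc : 0 < c) (A B : ℝ) :
    Tendsto (fun t => c * exp t - A - B * t) atTop atTop := by
  have hquot : Tendsto (fun t => (c * exp t + -A) / t ^ 1 + -B) atTop atTop :=
    (tendsto_mul_exp_add_div_pow_atTop c (-A) 1 hc).atTop_add tendsto_const_nhds
  refine (tendsto_id.atTop_mul_atTop₀ hquot).congr' ?_
  filter_upwards [eventually_gt_atTop 0] with t ht
  simp only [id]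
  field_simp
  ring

lemma tendsto_mul_exp_mul_sub_linear_atTop {c ε : ℝ} (hc : 0 < c) (hε : 0 < ε) (A B : ℝ) :
    Tendsto (fun s => c * exp (s * ε) - A - s * B) atTop atTop := by
  refine ((tendsto_mul_exp_sub_linear_atTop hc A (B / ε)).comp
    (tendsto_id.atTop_mul_const hε)).congr fun s => ?_
  simp only [Function.comp_apply, id]
  field_simp

theorem direction_positive_part_unbounded_general
    (m : ℝ)
    (ν : V3 → ℝ) (hνpos : ∀ v, 0 < ν v)
    (hass : ∀ l : L5, Integrable (fun v => ν v * expA m l v) ↔ l.2.2 < 0)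
    (l : L5) (hl : l.2.2 < 0)
    (ξ : L5)
    (hray : ∀ s : ℝ, 0 < s → (l + s • ξ).2.2 < 0)
    (hpos : 0 < volume {v : V3 | 0 < dot5 ξ (aVec m v)}) :
    ∀ ρ : L5, Tendsto (fun s : ℝ => zdual m ν (l + s • ξ) ρ) atTop atTop := by
  intro ρ
  obtain ⟨ε, hε, hEpos⟩ := exists_pos_measure_le_of_measure_pos hpos
  set E := {v : V3 | ε ≤ dot5 ξ (aVec m v)}
  have hE : MeasurableSet E :=
    (isClosed_le continuous_const (continuous_dot5_aVec m ξ)).measurableSet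
  have hc : 0 < ∫ v in E, ν v * expA m l v :=
    setIntegral_pos_of_pos (fun v => mul_pos (hνpos v) (exp_pos _))
      ((hass l).2 hl).integrableOn hEpos
  refine tendsto_atTop_mono' _ ?_
    (tendsto_mul_exp_mul_sub_linear_atTop hc hε (dot5 l ρ) (dot5 ξ ρ))
  filter_upwards [eventually_gt_atTop 0] with s hs
  have hint : Integrable fun v => ν v * expA m l v * exp (s * dot5 ξ (aVec m v)) := by
    simpa only [expA_add_smul, mul_assoc] using (hass _).2 (hray s hs)
  have hbound := setIntegral_mul_exp_le_integral_mul_exp (f := fun v => ν v * expA m l v)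
    hs.le (fun v => mul_nonneg (hνpos v).le (exp_pos _).le) hint hE fun v hv => hv
  have hz : zdual m ν (l + s • ξ) ρ =
      (∫ v, ν v * expA m l v * exp (s * dot5 ξ (aVec m v))) - dot5 l ρ - s * dot5 ξ ρ := by
    simp only [zdual, dot5_add_smul, expA_add_smul, mul_assoc]
    ring
  linarith

/-- if the ray `λ + sξ` stays in `Λ` for all `s > 0` and the set
`{v : ξ·a(v) > 0}` has positive Lebesgue measure, then `z(λ+sξ;ρ) → +∞` as
`s → +∞` for every `ρ ∈ ℝ⁵`. -/
theorem direction_positive_part_unbounded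
    (m : ℝ) (hm : 0 < m)
    (ν : V3 → ℝ) (hνmeas : Measurable ν) (hνpos : ∀ v, 0 < ν v)
    (hass : ∀ l : L5, Integrable (fun v => ν v * expA m l v) ↔ l.2.2 < 0)
    (l : L5) (hl : l.2.2 < 0)
    (ξ : L5) (hξ : ‖ξ‖ = 1)
    (hray : ∀ s : ℝ, 0 < s → (l + s • ξ).2.2 < 0)
    (hpos : 0 < volume {v : V3 | 0 < dot5 ξ (aVec m v)}) :
    ∀ ρ : L5, Tendsto (fun s : ℝ => zdual m ν (l + s • ξ) ρ) atTop atTop :=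
  direction_positive_part_unbounded_general m ν hνpos hass l hl ξ hray hpos
end
end
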